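/- arXiv:2401.15719 — 4 statements merged into one kernel-verified Lean document; each statement's English description precedes it below -/
import Mathlib

section
/- Let A and B be real d×d matrices and let Σ be a symmetric positive definite d×d matrix satisfying the Lyapunov equation ΣAᵀ + AΣ + BBᵀ = 0. Let Z̃ be a Gaussian random vector with law N(0, Σ). Then for every twice continuously differentiable function f : ℝ^d → ℝ whose Hessian is bounded on ℝ^d, E[ ∇f(Z̃)ᵀ A Z̃ + (1/2) Tr(∇²f(Z̃) BBᵀ) ] = 0. -/
open MeasureTheory ProbabilityTheory
open scoped BigOperators NNReal ENNReal RealInnerProductSpace Matrix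

noncomputable section

/-- The standard Gaussian measure `N(0, I_d)` on `ℝ^d`. -/
def stdGaussian (d : ℕ) : Measure (EuclideanSpace ℝ (Fin d)) :=
  (Measure.pi fun _ : Fin d => gaussianReal 0 1).map (EuclideanSpace.equiv (Fin d) ℝ).symm

/-- Multiplication of a vector in `ℝ^d` by a `d × d` matrix. -/
def mulVecE {d : ℕ} (M : Matrix (Fin d) (Fin d) ℝ) (x : EuclideanSpace ℝ (Fin d)) :
    EuclideanSpace ℝ (Fin d) :=
  (EuclideanSpace.equiv (Fin d) ℝ).symm (M.mulVec (EuclideanSpace.equiv (Fin d) ℝ x))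

/-- The Hessian of `f : ℝ^d → ℝ`, as a continuous linear map. -/
def hess {d : ℕ} (f : EuclideanSpace ℝ (Fin d) → ℝ) (x : EuclideanSpace ℝ (Fin d)) :
    EuclideanSpace ℝ (Fin d) →L[ℝ] EuclideanSpace ℝ (Fin d) :=
  fderiv ℝ (fun y => gradient f y) x

/-- The Laplacian of `f : ℝ^d → ℝ` (trace of the Hessian). -/
def lap {d : ℕ} (f : EuclideanSpace ℝ (Fin d) → ℝ) (x : EuclideanSpace ℝ (Fin d)) : ℝ :=
  ∑ i : Fin d, ⟪hess f x (EuclideanSpace.single i 1), EuclideanSpace.single i 1⟫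

/-- The Hessian of `f` as a `d × d` matrix. -/
def hessMat {d : ℕ} (f : EuclideanSpace ℝ (Fin d) → ℝ) (x : EuclideanSpace ℝ (Fin d)) :
    Matrix (Fin d) (Fin d) ℝ :=
  Matrix.of fun i j => ⟪EuclideanSpace.single i (1:ℝ), hess f x (EuclideanSpace.single j 1)⟫

/-- The centered Gaussian measure on `ℝ^d` with covariance matrix `S`, realized as the
pushforward of the standard Gaussian by the positive semidefinite square root of `S`. -/
def gaussianCov {d : ℕ} {S : Matrix (Fin d) (Fin d) ℝ} (hS : S.PosSemidef) :
    Measure (EuclideanSpace ℝ (Fin d)) :=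
  (stdGaussian d).map fun z => mulVecE
    ((hS.1.eigenvectorUnitary : Matrix (Fin d) (Fin d) ℝ) *
      Matrix.diagonal ((↑) ∘ (fun x : ℝ => √x) ∘ hS.1.eigenvalues) *
      (star hS.1.eigenvectorUnitary : Matrix (Fin d) (Fin d) ℝ)) z

/-!
Write `Z̃ = C X` with `C = Σ^{1/2}` and `X` standard Gaussian on `ℝ^d`. Stein's identity
`E[⟨X, G X⟩] = E[tr DG(X)]`, applied to `G x = (A C)ᵀ ∇f(C x)`, turns the drift term
`E[∇f(Z̃)ᵀ A Z̃]` into `E[tr((A C)ᵀ ∇²f(Z̃) C)] = E[tr(∇²f(Z̃) Σ Aᵀ)]`. By the Lyapunov equation and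
the symmetry of the Hessian, `½ tr(∇²f BBᵀ) = -tr(∇²f Σ Aᵀ)`, so the two terms cancel pointwise.
Stein's identity on `ℝ^d` reduces, coordinate by coordinate and by Fubini, to the one-dimensional
integration by parts against the standard normal density `φ`, for which `φ' = -t φ`; the bounded
Hessian makes `∇f` grow at most linearly, which gives all the integrability needed.
-/

section Integrability

variable {E F : Type*} [NormedAddCommGroup E] [NormedAddCommGroup F] [MeasurableSpace E]
  {μ : Measure E} [IsFiniteMeasure μ]

lemma integrable_of_norm_le_quadratic (hμ : MemLp id 2 μ) {h : E → F}
    (hm : AEStronglyMeasurable h μ) {a b c : ℝ} (hb : ∀ x, ‖h x‖ ≤ a + b * ‖x‖ + c * ‖x‖ ^ 2) :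
    Integrable h μ := by
  have h1 : Integrable (fun x => ‖x‖) μ := (hμ.integrable one_le_two).norm
  have h2 : Integrable (fun x => ‖x‖ ^ 2) μ := hμ.integrable_norm_pow two_ne_zero
  exact (((integrable_const a).add (h1.const_mul b)).add (h2.const_mul c)).mono' hm
    (ae_of_all _ hb)

end Integrability

lemma norm_le_add_mul_norm_of_norm_fderiv_le {E F : Type*} [NormedAddCommGroup E]
    [NormedSpace ℝ E] [NormedAddCommGroup F] [NormedSpace ℝ F] {h : E → F}
    (hh : Differentiable ℝ h) {K : ℝ} (hK : ∀ x, ‖fderiv ℝ h x‖ ≤ K) (x : E) :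
    ‖h x‖ ≤ ‖h 0‖ + K * ‖x‖ := by
  have := convex_univ.norm_image_sub_le_of_norm_fderiv_le (fun z _ => hh z) (fun z _ => hK z)
    (Set.mem_univ 0) (Set.mem_univ x)
  rw [sub_zero] at this
  linarith [norm_le_norm_add_norm_sub' (h x) (h 0)]

section Moments

variable {E : Type*} [NormedAddCommGroup E] [NormedSpace ℝ E] [MeasurableSpace E]
  [BorelSpace E] {μ : Measure E} [IsFiniteMeasure μ]

lemma integrable_mul_of_norm_fderiv_le (hμ : MemLp id 2 μ) (ℓ : E →L[ℝ] ℝ) {h : E → ℝ}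
    (hh : Differentiable ℝ h) {K : ℝ} (hK : ∀ x, ‖fderiv ℝ h x‖ ≤ K) :
    Integrable (fun x => ℓ x * h x) μ := by
  refine integrable_of_norm_le_quadratic hμ
    (ℓ.continuous.mul hh.continuous).aestronglyMeasurable
    (a := 0) (b := ‖ℓ‖ * ‖h 0‖) (c := ‖ℓ‖ * K) fun x => ?_
  calc ‖ℓ x * h x‖ = ‖ℓ x‖ * ‖h x‖ := norm_mul _ _
    _ ≤ (‖ℓ‖ * ‖x‖) * (‖h 0‖ + K * ‖x‖) := by
        gcongr
        · exact ℓ.le_opNorm x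
        · exact norm_le_add_mul_norm_of_norm_fderiv_le hh hK x
    _ = 0 + ‖ℓ‖ * ‖h 0‖ * ‖x‖ + ‖ℓ‖ * K * ‖x‖ ^ 2 := by ring

lemma integrable_fderiv_apply_of_norm_fderiv_le (hμ : MemLp id 2 μ) {h : E → ℝ} {K : ℝ}
    (hK : ∀ x, ‖fderiv ℝ h x‖ ≤ K) (v : E) :
    Integrable (fun x => fderiv ℝ h x v) μ :=
  integrable_of_norm_le_quadratic hμ (measurable_fderiv_apply_const ℝ h v).aestronglyMeasurable
    (a := K * ‖v‖) (b := 0) (c := 0) fun x => by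
      simpa using (fderiv ℝ h x).le_of_opNorm_le (hK x) v

end Moments

lemma hasDerivAt_gaussianPDFReal_zero_one (t : ℝ) :
    HasDerivAt (gaussianPDFReal 0 1) (-t * gaussianPDFReal 0 1 t) t := by
  have h : HasDerivAt (fun s : ℝ => -(s - 0) ^ 2 / (2 * ((1 : ℝ≥0) : ℝ))) (-t) t :=
    ((((hasDerivAt_id' t).sub_const 0).pow 2).neg.div_const _).congr_deriv (by push_cast; ring)
  exact (h.exp.const_mul _).congr_deriv (by simp only [gaussianPDFReal]; ring)

lemma integrable_gaussianPDFReal_mul {m : ℝ} {v : ℝ≥0} (hv : v ≠ 0) {w : ℝ → ℝ}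
    (hw : Integrable w (gaussianReal m v)) : Integrable (fun t => gaussianPDFReal m v t * w t) := by
  rw [gaussianReal_of_var_ne_zero m hv, integrable_withDensity_iff_integrable_smul'
    (measurable_gaussianPDF m v) (ae_of_all _ fun _ => gaussianPDF_lt_top)] at hw
  simpa [toReal_gaussianPDF] using hw

theorem integral_mul_gaussianReal_eq_integral_deriv {g : ℝ → ℝ} (hg : Differentiable ℝ g)
    {K : ℝ} (hK : ∀ t, |deriv g t| ≤ K) :
    ∫ t, t * g t ∂(gaussianReal 0 1) = ∫ t, deriv g t ∂(gaussianReal 0 1) := by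
  have hμ : MemLp id 2 (gaussianReal 0 1) := IsGaussian.memLp_two_id
  have hgrowth (t : ℝ) : |g t| ≤ |g 0| + K * |t| := by
    simpa using norm_le_add_mul_norm_of_norm_fderiv_le hg
      (fun s => by simpa [← norm_deriv_eq_norm_fderiv] using hK s) t
  have hxg : Integrable (fun t => t * g t) (gaussianReal 0 1) :=
    integrable_of_norm_le_quadratic hμ (continuous_id.mul hg.continuous).aestronglyMeasurable
      (a := 0) (b := |g 0|) (c := K) fun t => calc
        ‖t * g t‖ = |t| * |g t| := by rw [Real.norm_eq_abs, abs_mul]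
        _ ≤ |t| * (|g 0| + K * |t|) := by gcongr; exact hgrowth t
        _ = 0 + |g 0| * ‖t‖ + K * ‖t‖ ^ 2 := by rw [Real.norm_eq_abs]; ring
  have hg_int : Integrable g (gaussianReal 0 1) :=
    integrable_of_norm_le_quadratic hμ hg.continuous.aestronglyMeasurable
      (a := |g 0|) (b := K) (c := 0) fun t => by simpa using hgrowth t
  have hdg : Integrable (deriv g) (gaussianReal 0 1) :=
    integrable_of_norm_le_quadratic hμ (measurable_deriv g).aestronglyMeasurable
      (a := K) (b := 0) (c := 0) fun t => by simpa using hK t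
  have ibp := integral_mul_deriv_eq_deriv_mul_of_integrable (u := g)
    (v := fun t => -gaussianPDFReal 0 1 t) (u' := deriv g)
    (v' := fun t => t * gaussianPDFReal 0 1 t)
    (fun t _ => (hg t).hasDerivAt)
    (fun t _ => (hasDerivAt_gaussianPDFReal_zero_one t).neg.congr_deriv (by ring))
    ((integrable_gaussianPDFReal_mul one_ne_zero hxg).congr
      (ae_of_all _ fun t => by simp only [Pi.mul_apply]; ring))
    ((integrable_gaussianPDFReal_mul one_ne_zero hdg).neg.congr
      (ae_of_all _ fun t => by simp only [Pi.neg_apply, Pi.mul_apply]; ring))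
    ((integrable_gaussianPDFReal_mul one_ne_zero hg_int).neg.congr
      (ae_of_all _ fun t => by simp only [Pi.neg_apply, Pi.mul_apply]; ring))
  simp only [integral_gaussianReal_eq_integral_smul one_ne_zero, smul_eq_mul]
  calc ∫ t, gaussianPDFReal 0 1 t * (t * g t) = ∫ t, g t * (t * gaussianPDFReal 0 1 t) := by
        congr 1 with t; ring
    _ = ∫ t, gaussianPDFReal 0 1 t * deriv g t := by
        rw [ibp, ← integral_neg]; congr 1 with t; ring

lemma map_ofLp_stdGaussian {ι : Type*} [Fintype ι] :
    (ProbabilityTheory.stdGaussian (EuclideanSpace ℝ ι)).map (WithLp.ofLp (p := 2)) =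
      Measure.pi fun _ : ι => gaussianReal 0 1 := by
  rw [← map_pi_eq_stdGaussian, Measure.map_map (by fun_prop) (by fun_prop)]
  exact Measure.map_id

instance isGaussian_pi_gaussianReal {ι : Type*} [Fintype ι] :
    IsGaussian (Measure.pi fun _ : ι => gaussianReal 0 1) := by
  rw [← map_ofLp_stdGaussian]
  exact isGaussian_map_equiv (PiLp.continuousLinearEquiv 2 ℝ fun _ : ι => ℝ)

theorem integral_eval_mul_pi_gaussianReal_eq_integral_fderiv {d : ℕ} (i : Fin d)
    {h : (Fin d → ℝ) → ℝ} (hh : Differentiable ℝ h) {K : ℝ} (hK : ∀ x, ‖fderiv ℝ h x‖ ≤ K) :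
    ∫ x, x i * h x ∂(Measure.pi fun _ => gaussianReal 0 1) =
      ∫ x, fderiv ℝ h x (Pi.single i 1) ∂(Measure.pi fun _ => gaussianReal 0 1) := by
  obtain ⟨n, rfl⟩ : ∃ n, d = n + 1 := ⟨d - 1, by have := i.pos; omega⟩
  have hμ : MemLp id 2 (Measure.pi fun _ : Fin (n + 1) => gaussianReal 0 1) :=
    IsGaussian.memLp_two_id
  let e := MeasurableEquiv.piFinSuccAbove (fun _ : Fin (n + 1) => ℝ) i
  have he : MeasurePreserving e.symm
      ((gaussianReal 0 1).prod (Measure.pi fun _ : Fin n => gaussianReal 0 1))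
      (Measure.pi fun _ => gaussianReal 0 1) :=
    (measurePreserving_piFinSuccAbove (fun _ => gaussianReal 0 1) i).symm
  have hline (y : Fin n → ℝ) (t : ℝ) :
      HasDerivAt (fun s => h (e.symm (s, y))) (fderiv ℝ h (e.symm (t, y)) (Pi.single i 1)) t := by
    have hupd : Function.update (e.symm (0, y)) i = fun s => e.symm (s, y) := by
      ext s : 1
      exact Fin.update_insertNth (α := fun _ => ℝ) i 0 s y
    have := (hh _).hasFDerivAt.comp_hasDerivAt t (hasDerivAt_update (e.symm (0, y)) i t)
    rwa [hupd] at this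
  have hint₁ : Integrable (fun z => e.symm z i * h (e.symm z))
      ((gaussianReal 0 1).prod (Measure.pi fun _ : Fin n => gaussianReal 0 1)) :=
    (he.integrable_comp_emb e.symm.measurableEmbedding).2
      (integrable_mul_of_norm_fderiv_le hμ (ContinuousLinearMap.proj i) hh hK)
  have hint₂ : Integrable (fun z => fderiv ℝ h (e.symm z) (Pi.single i 1))
      ((gaussianReal 0 1).prod (Measure.pi fun _ : Fin n => gaussianReal 0 1)) :=
    (he.integrable_comp_emb e.symm.measurableEmbedding).2
      (integrable_fderiv_apply_of_norm_fderiv_le hμ hK _)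
  rw [← he.integral_comp', ← he.integral_comp', integral_prod_symm _ hint₁,
    integral_prod_symm _ hint₂]
  congr 1 with y
  have hcoord (t : ℝ) : e.symm (t, y) i = t := Fin.insertNth_apply_same (α := fun _ => ℝ) i t y
  simp only [hcoord]
  rw [integral_mul_gaussianReal_eq_integral_deriv (fun t => (hline y t).differentiableAt)
    (K := K) fun t => ?_]
  · simp only [(hline y _).deriv]
  · rw [(hline y t).deriv, ← Real.norm_eq_abs]
    simpa [Pi.norm_single] using (fderiv ℝ h _).le_of_opNorm_le (hK _) (Pi.single i (1 : ℝ))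

theorem integral_dotProduct_sub_trace_fderiv_eq_zero {d : ℕ}
    {G : (Fin d → ℝ) → Fin d → ℝ} (hG : Differentiable ℝ G) {K : ℝ}
    (hK : ∀ x, ‖fderiv ℝ G x‖ ≤ K) :
    ∫ x, (x ⬝ᵥ G x - LinearMap.trace ℝ _ (fderiv ℝ G x : (Fin d → ℝ) →ₗ[ℝ] Fin d → ℝ))
      ∂(Measure.pi fun _ => gaussianReal 0 1) = 0 := by
  have hμ : MemLp id 2 (Measure.pi fun _ : Fin d => gaussianReal 0 1) := IsGaussian.memLp_two_id
  have hGi (i : Fin d) : Differentiable ℝ fun x => G x i := differentiable_pi.1 hG i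
  have hfderiv (i : Fin d) (x) :
      fderiv ℝ (fun x => G x i) x = (ContinuousLinearMap.proj i).comp (fderiv ℝ G x) :=
    fderiv_apply (hG x) i
  have hKi (i : Fin d) (x) : ‖fderiv ℝ (fun x => G x i) x‖ ≤ K := by
    rw [hfderiv]
    refine (ContinuousLinearMap.opNorm_le_bound _ (norm_nonneg _) fun v => ?_).trans (hK x)
    exact (norm_le_pi_norm (fderiv ℝ G x v) i).trans ((fderiv ℝ G x).le_opNorm v)
  have hsplit (x : Fin d → ℝ) :
      x ⬝ᵥ G x - LinearMap.trace ℝ _ (fderiv ℝ G x : (Fin d → ℝ) →ₗ[ℝ] Fin d → ℝ) =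
        ∑ i, (x i * G x i - fderiv ℝ (fun x => G x i) x (Pi.single i 1)) := by
    rw [LinearMap.trace_eq_matrix_trace ℝ (Pi.basisFun ℝ (Fin d)), LinearMap.toMatrix_eq_toMatrix',
      Finset.sum_sub_distrib]
    simp [hfderiv, Matrix.trace, dotProduct, LinearMap.toMatrix'_apply]
  simp_rw [hsplit]
  have hint₁ (i : Fin d) : Integrable (fun x => x i * G x i)
      (Measure.pi fun _ => gaussianReal 0 1) :=
    integrable_mul_of_norm_fderiv_le hμ (ContinuousLinearMap.proj i) (hGi i) (hKi i)
  have hint₂ (i : Fin d) : Integrable (fun x => fderiv ℝ (fun x => G x i) x (Pi.single i 1))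
      (Measure.pi fun _ => gaussianReal 0 1) :=
    integrable_fderiv_apply_of_norm_fderiv_le hμ (hKi i) _
  rw [integral_finsetSum _ fun i _ => by exact (hint₁ i).sub (hint₂ i)]
  refine Finset.sum_eq_zero fun i _ => ?_
  rw [integral_sub (hint₁ i) (hint₂ i),
    integral_eval_mul_pi_gaussianReal_eq_integral_fderiv i (hGi i) (hKi i), sub_self]

section Hessian

variable {d : ℕ} {f : EuclideanSpace ℝ (Fin d) → ℝ}

lemma inner_hess_eq_fderiv_fderiv (z u v : EuclideanSpace ℝ (Fin d)) :
    ⟪u, hess f z v⟫ = fderiv ℝ (fderiv ℝ f) z v u := by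
  have hgrad : (fun y => gradient f y) =
      (InnerProductSpace.toDual ℝ (EuclideanSpace ℝ (Fin d))).symm ∘ fderiv ℝ f := rfl
  rw [hess, hgrad, LinearIsometryEquiv.comp_fderiv, real_inner_comm]
  exact InnerProductSpace.toDual_symm_apply

lemma hessMat_transpose (hf : ContDiff ℝ 2 f) (z : EuclideanSpace ℝ (Fin d)) :
    (hessMat f z)ᵀ = hessMat f z := by
  ext i j
  simp only [Matrix.transpose_apply, hessMat, Matrix.of_apply, inner_hess_eq_fderiv_fderiv]
  exact (hf.contDiffAt.isSymmSndFDerivAt (by simp)) _ _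

lemma contDiff_gradient (hf : ContDiff ℝ 2 f) : ContDiff ℝ 1 (gradient f) :=
  (InnerProductSpace.toDual ℝ _).symm.contDiff.comp (hf.fderiv_right (by norm_num))

lemma toMatrix'_hess (z : EuclideanSpace ℝ (Fin d)) :
    LinearMap.toMatrix' ((EuclideanSpace.equiv (Fin d) ℝ).toLinearMap ∘ₗ
      (hess f z).toLinearMap ∘ₗ (EuclideanSpace.equiv (Fin d) ℝ).symm.toLinearMap) =
      hessMat f z := by
  ext i j
  simp [LinearMap.toMatrix'_apply, hessMat, EuclideanSpace.inner_single_left]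

lemma continuous_hessMat (hf : ContDiff ℝ 2 f) : Continuous (hessMat f) := by
  have hhess : Continuous (hess f) := (contDiff_gradient hf).continuous_fderiv one_ne_zero
  refine continuous_pi fun i => continuous_pi fun j => ?_
  exact continuous_const.inner (hhess.clm_apply continuous_const)

end Hessian

lemma trace_mul_mul_transpose_of_lyapunov {n R : Type*} [Fintype n] [CommRing R]
    {A B S H : Matrix n n R}
    (hH : Hᵀ = H) (hS : Sᵀ = S) (hL : S * Aᵀ + A * S + B * Bᵀ = 0) :
    (H * (B * Bᵀ)).trace = -2 * (H * S * Aᵀ).trace := by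
  have hBB : B * Bᵀ = -(S * Aᵀ) - A * S := by rw [← sub_eq_zero, ← hL]; abel
  have hcycle : (H * (A * S)).trace = (H * S * Aᵀ).trace := by
    rw [← Matrix.trace_transpose, Matrix.transpose_mul, Matrix.transpose_mul, hH, hS,
      Matrix.trace_mul_comm, Matrix.mul_assoc]
  rw [hBB, Matrix.mul_sub, Matrix.mul_neg, Matrix.trace_sub, Matrix.trace_neg, hcycle,
    Matrix.mul_assoc]
  ring

section SquareRoot

open scoped MatrixOrder

lemma transpose_cfcSqrt {n : Type*} [Fintype n] [DecidableEq n] (S : Matrix n n ℝ) :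
    (CFC.sqrt S)ᵀ = CFC.sqrt S := by
  simpa [Matrix.IsHermitian, Matrix.conjTranspose_eq_transpose_of_trivial] using
    (Matrix.nonneg_iff_posSemidef.1 (CFC.sqrt_nonneg S)).1

lemma cfcSqrt_mul_cfcSqrt {n : Type*} [Fintype n] [DecidableEq n] {S : Matrix n n ℝ}
    (hS : S.PosSemidef) : CFC.sqrt S * CFC.sqrt S = S :=
  CFC.sqrt_mul_sqrt_self S hS.nonneg

lemma gaussianCov_eq_map_pi {d : ℕ} {S : Matrix (Fin d) (Fin d) ℝ} (hS : S.PosSemidef) :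
    gaussianCov hS =
      (Measure.pi fun _ => gaussianReal 0 1).map fun x => WithLp.toLp 2 (CFC.sqrt S *ᵥ x) := by
  have hsqrt : (hS.1.eigenvectorUnitary : Matrix (Fin d) (Fin d) ℝ) *
      Matrix.diagonal ((↑) ∘ (fun x : ℝ => √x) ∘ hS.1.eigenvalues) *
      (star hS.1.eigenvectorUnitary : Matrix (Fin d) (Fin d) ℝ) = CFC.sqrt S := by
    rw [CFC.sqrt_eq_real_sqrt S hS.nonneg, cfcₙ_eq_cfc, hS.1.cfc_eq, Matrix.IsHermitian.cfc,
      Unitary.conjStarAlgAut_apply]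
    rfl
  rw [gaussianCov, hsqrt, _root_.stdGaussian,
    Measure.map_map (by unfold mulVecE; fun_prop) (by fun_prop)]
  rfl

end SquareRoot

def ouGenerator {d : ℕ} (A B : Matrix (Fin d) (Fin d) ℝ) (f : EuclideanSpace ℝ (Fin d) → ℝ)
    (z : EuclideanSpace ℝ (Fin d)) : ℝ :=
  ⟪gradient f z, mulVecE A z⟫ + (1/2) * (hessMat f z * (B * Bᵀ)).trace

lemma continuous_ouGenerator {d : ℕ} (A B : Matrix (Fin d) (Fin d) ℝ)
    {f : EuclideanSpace ℝ (Fin d) → ℝ} (hf : ContDiff ℝ 2 f) : Continuous (ouGenerator A B f) := by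
  have hA : Continuous (mulVecE A) := by unfold mulVecE; fun_prop
  exact ((contDiff_gradient hf).continuous.inner hA).add
    (continuous_const.mul ((continuous_hessMat hf).matrix_mul continuous_const).matrix_trace)

lemma ouGenerator_toLp_mulVec {d : ℕ} {A B S C : Matrix (Fin d) (Fin d) ℝ}
    (hC : Cᵀ = C) (hCS : C * C = S) (hLyap : S * Aᵀ + A * S + B * Bᵀ = 0)
    {f : EuclideanSpace ℝ (Fin d) → ℝ} (hf : ContDiff ℝ 2 f) (x : Fin d → ℝ) :
    ouGenerator A B f (WithLp.toLp 2 (C *ᵥ x)) =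
      x ⬝ᵥ ((A * C)ᵀ *ᵥ (gradient f (WithLp.toLp 2 (C *ᵥ x))).ofLp) -
        ((A * C)ᵀ * hessMat f (WithLp.toLp 2 (C *ᵥ x)) * C).trace := by
  set z := WithLp.toLp 2 (C *ᵥ x)
  have hS : Sᵀ = S := by rw [← hCS, Matrix.transpose_mul, hC]
  have hdrift : ⟪gradient f z, mulVecE A z⟫ = x ⬝ᵥ ((A * C)ᵀ *ᵥ (gradient f z).ofLp) := by
    rw [EuclideanSpace.inner_eq_star_dotProduct, star_trivial, Matrix.mulVec_transpose,
      dotProduct_comm x, ← Matrix.dotProduct_mulVec, dotProduct_comm, ← Matrix.mulVec_mulVec]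
    rfl
  have hdiffusion : ((A * C)ᵀ * hessMat f z * C).trace = (hessMat f z * S * Aᵀ).trace := by
    rw [Matrix.trace_mul_cycle, Matrix.transpose_mul, hC, Matrix.trace_mul_comm, ← hCS]
    simp only [Matrix.mul_assoc]
  rw [ouGenerator, hdrift, trace_mul_mul_transpose_of_lyapunov (hessMat_transpose hf z) hS hLyap,
    hdiffusion]
  ring

theorem integral_ouGenerator_comp_mulVec_eq_zero {d : ℕ} {A B S C : Matrix (Fin d) (Fin d) ℝ}
    (hC : Cᵀ = C) (hCS : C * C = S) (hLyap : S * Aᵀ + A * S + B * Bᵀ = 0)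
    {f : EuclideanSpace ℝ (Fin d) → ℝ} (hf : ContDiff ℝ 2 f) {M : ℝ}
    (hbdd : ∀ x, ‖hess f x‖ ≤ M) :
    ∫ x, ouGenerator A B f (WithLp.toLp 2 (C *ᵥ x)) ∂(Measure.pi fun _ => gaussianReal 0 1) =
      0 := by
  let Φ := EuclideanSpace.equiv (Fin d) ℝ
  let L : (Fin d → ℝ) →L[ℝ] EuclideanSpace ℝ (Fin d) :=
    (Φ.symm : _ →L[ℝ] _) ∘L LinearMap.toContinuousLinearMap (Matrix.toLin' C)
  let P : EuclideanSpace ℝ (Fin d) →L[ℝ] Fin d → ℝ :=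
    LinearMap.toContinuousLinearMap (Matrix.toLin' (A * C)ᵀ) ∘L (Φ : _ →L[ℝ] _)
  have hgrad := contDiff_gradient hf
  have hderiv (x : Fin d → ℝ) :
      HasFDerivAt (fun x => P (gradient f (L x))) (P ∘L hess f (L x) ∘L L) x :=
    P.hasFDerivAt.comp x (((hgrad.differentiable one_ne_zero) _).hasFDerivAt.comp x L.hasFDerivAt)
  have hnorm (x : Fin d → ℝ) : ‖P ∘L hess f (L x) ∘L L‖ ≤ ‖P‖ * M * ‖L‖ :=
    (P.opNorm_comp_le _).trans <| by
      rw [mul_assoc]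
      gcongr
      exact ((hess f (L x)).opNorm_comp_le L).trans (by gcongr; exact hbdd _)
  have htrace (x : Fin d → ℝ) :
      LinearMap.trace ℝ _ ((P ∘L hess f (L x) ∘L L : _ →L[ℝ] _) : (Fin d → ℝ) →ₗ[ℝ] Fin d → ℝ) =
        ((A * C)ᵀ * hessMat f (L x) * C).trace := by
    have hcomp : ((P ∘L hess f (L x) ∘L L : _ →L[ℝ] _) : (Fin d → ℝ) →ₗ[ℝ] Fin d → ℝ) =
        Matrix.toLin' (A * C)ᵀ ∘ₗ (Φ.toLinearMap ∘ₗ (hess f (L x)).toLinearMap ∘ₗ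
          Φ.symm.toLinearMap) ∘ₗ Matrix.toLin' C := rfl
    rw [LinearMap.trace_eq_matrix_trace ℝ (Pi.basisFun ℝ (Fin d)), LinearMap.toMatrix_eq_toMatrix',
      hcomp, LinearMap.toMatrix'_comp, LinearMap.toMatrix'_comp, LinearMap.toMatrix'_toLin',
      LinearMap.toMatrix'_toLin', toMatrix'_hess, Matrix.mul_assoc]
  have hpoint (x : Fin d → ℝ) : ouGenerator A B f (WithLp.toLp 2 (C *ᵥ x)) =
      x ⬝ᵥ P (gradient f (L x)) -
        LinearMap.trace ℝ _
          (fderiv ℝ (fun x => P (gradient f (L x))) x : (Fin d → ℝ) →ₗ[ℝ] Fin d → ℝ) := by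
    rw [(hderiv x).fderiv, htrace, ouGenerator_toLp_mulVec hC hCS hLyap hf]
    rfl
  simp_rw [hpoint]
  exact integral_dotProduct_sub_trace_fderiv_eq_zero (fun x => (hderiv x).differentiableAt)
    fun x => (hderiv x).fderiv ▸ hnorm x

/-- Lemma 2.2 (stationarity of the O-U process): if `Σ` is symmetric positive definite and
solves the Lyapunov equation `ΣAᵀ + AΣ + BBᵀ = 0`, and `Z̃ ~ N(0,Σ)`, then the expectation of
the O-U generator `∇f(Z̃)ᵀAZ̃ + (1/2)Tr(∇²f(Z̃)BBᵀ)` vanishes for every twice continuously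
differentiable `f : ℝ^d → ℝ` with bounded Hessian. -/
theorem ou_generator_mean_zero {d : ℕ} (A B S : Matrix (Fin d) (Fin d) ℝ)
    (hS : S.PosDef) (hLyap : S * Aᵀ + A * S + B * Bᵀ = 0)
    (f : EuclideanSpace ℝ (Fin d) → ℝ) (hf : ContDiff ℝ 2 f)
    (M : ℝ) (hbdd : ∀ x, ‖hess f x‖ ≤ M) :
    ∫ z, (⟪gradient f z, mulVecE A z⟫ + (1/2) * (hessMat f z * (B * Bᵀ)).trace)
        ∂(gaussianCov hS.posSemidef) = 0 := by
  change ∫ z, ouGenerator A B f z ∂(gaussianCov hS.posSemidef) = 0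
  rw [gaussianCov_eq_map_pi, integral_map (by fun_prop)
    (continuous_ouGenerator A B hf).aestronglyMeasurable]
  exact integral_ouGenerator_comp_mulVec_eq_zero (transpose_cfcSqrt S)
    (cfcSqrt_mul_cfcSqrt hS.posSemidef) hLyap hf hbdd
end
end

section
/- Under Assumption 3.1, there exists a constant K (depending on K₁, ρ, M_V, P and Σ_∞) such that for all k ≥ 1, ‖ Σ_∞^{−1/2} E(Σ_k) Σ_∞^{−1/2} − I ‖_HS ≤ K ρ^k; in particular, E(Σ_k) converges to Σ_∞ geometrically fast. Here E(Σ_k) = Σ_{i,j∈S} p_i(k) P_{ij} (V(j) − E(V(X₁)|X₀=i))(V(j) − E(V(X₁)|X₀=i))ᵀ, where p_i(k) = Prob(X_k = i). -/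
open MeasureTheory ProbabilityTheory
open scoped BigOperators NNReal ENNReal RealInnerProductSpace Matrix

noncomputable section

open scoped Classical

/-- The `n`-step transition probabilities of a transition matrix `Ptr` on a countable state
space. -/
def nstep {S : Type} (Ptr : S → S → ℝ) : ℕ → S → S → ℝ
  | 0 => fun x y => if x = y then 1 else 0
  | n + 1 => fun x y => ∑' z, nstep Ptr n x z * Ptr z y

/-- The square root of a positive semidefinite matrix, as `Matrix.PosSemidef.sqrt` was defined in
Mathlib (December 2024); it has since been removed from Mathlib. -/
noncomputable def Matrix.PosSemidef.sqrt {n : Type*} [Fintype n] [DecidableEq n]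
    {A : Matrix n n ℝ} (hA : A.PosSemidef) : Matrix n n ℝ :=
  hA.1.eigenvectorUnitary.1 * Matrix.diagonal ((↑) ∘ (√·) ∘ hA.1.eigenvalues) *
    (star hA.1.eigenvectorUnitary : Matrix n n ℝ)

/-- The Hilbert–Schmidt (Frobenius) norm of a `d × d` matrix. -/
noncomputable def hsNorm {d : ℕ} (M : Matrix (Fin d) (Fin d) ℝ) : ℝ :=
  Real.sqrt (∑ i : Fin d, ∑ j : Fin d, (M i j) ^ 2)

/-!
Write `p(k)` for the law of `X k`. The Markov property gives `p(k+1) = p(k) P`, hence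
`p(k) = p(0) Pᵏ`, and averaging the ergodicity bound over the initial law `p(0)` gives
`‖p(k) - π‖₁ ≤ K₁ ρᵏ`. Each entry of `E(Σ_k) - Σ_∞` integrates a function bounded by `(2 M_V)²`
against `(p(k) - π) ⊗ P`, so it is at most `‖p(k) - π‖₁ (2 M_V)²`. Finally
`Σ_∞^{-1/2} E(Σ_k) Σ_∞^{-1/2} - I = Σ_∞^{-1/2} (E(Σ_k) - Σ_∞) Σ_∞^{-1/2}`, and the
Hilbert–Schmidt norm is submultiplicative.
-/

lemma summable_of_tsum_ne_zero {ι α : Type*} [AddCommMonoid α] [TopologicalSpace α] {f : ι → α}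
    (h : ∑' i, f i ≠ 0) : Summable f :=
  not_not.1 fun hf => h (tsum_eq_zero_of_not_summable hf)

lemma abs_tsum_le_tsum_abs {ι : Type*} {f : ι → ℝ} (hf : Summable fun i => |f i|) :
    |∑' i, f i| ≤ ∑' i, |f i| := by
  simp only [← Real.norm_eq_abs] at hf ⊢
  exact norm_tsum_le_tsum_norm hf

lemma tsum_abs_tsum_le {α β : Type*} {f : α → β → ℝ}
    (hf : Summable fun p : α × β => |f p.1 p.2|) :
    ∑' y, |∑' x, f x y| ≤ ∑' x, ∑' y, |f x y| := by
  have hcol : Summable fun y => ∑' x, |f x y| := hf.prod_symm.prod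
  have hpoint : ∀ y, |∑' x, f x y| ≤ ∑' x, |f x y| := fun y =>
    abs_tsum_le_tsum_abs (hf.prod_symm.prod_factor y)
  calc ∑' y, |∑' x, f x y| ≤ ∑' y, ∑' x, |f x y| :=
        (hcol.of_nonneg_of_le (fun y => abs_nonneg _) hpoint).tsum_le_tsum hpoint hcol
    _ = ∑' x, ∑' y, |f x y| := hf.tsum_comm

section Stochastic

variable {S : Type}

structure IsProbVec (μ : S → ℝ) : Prop where
  nonneg : ∀ x, 0 ≤ μ x
  tsum_eq_one : ∑' x, μ x = 1

def IsStochastic (Q : S → S → ℝ) : Prop := ∀ x, IsProbVec (Q x)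

def tsumVecMul (μ : S → ℝ) (Q : S → S → ℝ) : S → ℝ := fun y => ∑' x, μ x * Q x y

variable {μ : S → ℝ} {Q R : S → S → ℝ}

lemma IsProbVec.summable (hμ : IsProbVec μ) : Summable μ :=
  summable_of_tsum_ne_zero (by simp [hμ.tsum_eq_one])

lemma IsProbVec.le_one (hμ : IsProbVec μ) (x : S) : μ x ≤ 1 :=
  hμ.tsum_eq_one ▸ hμ.summable.le_tsum x fun y _ => hμ.nonneg y

lemma IsStochastic.hasSum_mul (hQ : IsStochastic Q) (hμ0 : ∀ x, 0 ≤ μ x) (hμ : Summable μ) :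
    HasSum (fun p : S × S => μ p.1 * Q p.1 p.2) (∑' x, μ x) := by
  have hrow : ∀ x, HasSum (fun y => μ x * Q x y) (μ x) := fun x => by
    simpa [(hQ x).tsum_eq_one] using ((hQ x).summable.hasSum.mul_left (μ x))
  have hsum : Summable fun p : S × S => μ p.1 * Q p.1 p.2 :=
    (summable_prod_of_nonneg fun p => mul_nonneg (hμ0 p.1) ((hQ p.1).nonneg p.2)).2
      ⟨fun x => (hrow x).summable, by simpa only [fun x => (hrow x).tsum_eq] using hμ⟩
  simpa only [hsum.tsum_prod, fun x => (hrow x).tsum_eq] using hsum.hasSum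

lemma IsStochastic.summable_mul_mul (hQ : IsStochastic Q) {f : S → ℝ} (hf : Summable f)
    {w : S × S → ℝ} {C : ℝ} (hw : ∀ p, |w p| ≤ C) :
    Summable fun p : S × S => f p.1 * Q p.1 p.2 * w p := by
  refine .of_norm_bounded
    ((hQ.hasSum_mul (fun x => abs_nonneg (f x)) hf.abs).summable.mul_right C) fun p => ?_
  rw [Real.norm_eq_abs, abs_mul, abs_mul, abs_of_nonneg ((hQ p.1).nonneg p.2)]
  exact mul_le_mul_of_nonneg_left (hw p) (mul_nonneg (abs_nonneg _) ((hQ p.1).nonneg p.2))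

lemma IsStochastic.abs_tsum_mul_mul_le (hQ : IsStochastic Q) {f : S → ℝ} (hf : Summable f)
    {w : S × S → ℝ} {C : ℝ} (hw : ∀ p, |w p| ≤ C) :
    |∑' p : S × S, f p.1 * Q p.1 p.2 * w p| ≤ (∑' x, |f x|) * C := by
  have hmaj := (hQ.hasSum_mul (fun x => abs_nonneg (f x)) hf.abs).mul_right C
  have hpoint : ∀ p : S × S, |f p.1 * Q p.1 p.2 * w p| ≤ |f p.1| * Q p.1 p.2 * C := fun p => by
    rw [abs_mul, abs_mul, abs_of_nonneg ((hQ p.1).nonneg p.2)]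
    exact mul_le_mul_of_nonneg_left (hw p) (mul_nonneg (abs_nonneg _) ((hQ p.1).nonneg p.2))
  calc |∑' p : S × S, f p.1 * Q p.1 p.2 * w p|
      ≤ ∑' p : S × S, |f p.1 * Q p.1 p.2 * w p| :=
        abs_tsum_le_tsum_abs (hQ.summable_mul_mul hf hw).abs
    _ ≤ (∑' x, |f x|) * C :=
        hmaj.tsum_eq ▸ ((hQ.summable_mul_mul hf hw).abs.tsum_le_tsum hpoint hmaj.summable)

lemma IsStochastic.abs_tsum_mul_mul_sub_le (hQ : IsStochastic Q) {μ ν : S → ℝ}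
    (hμ : Summable μ) (hν : Summable ν) {w : S × S → ℝ} {C : ℝ} (hw : ∀ p, |w p| ≤ C) :
    |∑' p : S × S, μ p.1 * Q p.1 p.2 * w p - ∑' p : S × S, ν p.1 * Q p.1 p.2 * w p|
      ≤ (∑' x, |μ x - ν x|) * C := by
  rw [← (hQ.summable_mul_mul hμ hw).tsum_sub (hQ.summable_mul_mul hν hw)]
  simpa only [sub_mul] using hQ.abs_tsum_mul_mul_le (hμ.sub hν) hw

lemma IsProbVec.tsumVecMul (hμ : IsProbVec μ) (hQ : IsStochastic Q) :
    IsProbVec (tsumVecMul μ Q) where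
  nonneg y := tsum_nonneg fun x => mul_nonneg (hμ.nonneg x) ((hQ x).nonneg y)
  tsum_eq_one := by
    have h := hQ.hasSum_mul hμ.nonneg hμ.summable
    rw [hμ.tsum_eq_one] at h
    simp only [_root_.tsumVecMul]
    rw [h.summable.tsum_comm, ← h.summable.tsum_prod, h.tsum_eq]

lemma tsumVecMul_tsumVecMul (hμ : IsProbVec μ) (hQ : IsStochastic Q) (hR : IsStochastic R) :
    tsumVecMul (tsumVecMul μ Q) R = tsumVecMul μ fun x => tsumVecMul (Q x) R := by
  funext z
  have hdom := hQ.hasSum_mul hμ.nonneg hμ.summable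
  have hsum : Summable fun p : S × S => μ p.1 * Q p.1 p.2 * R p.2 z :=
    hdom.summable.of_nonneg_of_le
      (fun p => mul_nonneg (mul_nonneg (hμ.nonneg _) ((hQ _).nonneg _)) ((hR _).nonneg _))
      fun p => mul_le_of_le_one_right (mul_nonneg (hμ.nonneg _) ((hQ _).nonneg _))
        ((hR _).le_one _)
  simp only [_root_.tsumVecMul, ← tsum_mul_right, ← tsum_mul_left, ← mul_assoc]
  exact hsum.tsum_comm

lemma isStochastic_nstep {P : S → S → ℝ} (hP : IsStochastic P) (n : ℕ) :
    IsStochastic (nstep P n) := by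
  induction n with
  | zero =>
    refine fun x => ⟨fun y => by unfold nstep; positivity, ?_⟩
    simp only [nstep, eq_comm (a := x)]
    exact tsum_ite_eq x 1
  | succ n ih => exact fun x => (ih x).tsumVecMul hP

lemma tsumVecMul_nstep_zero (P : S → S → ℝ) (μ : S → ℝ) : tsumVecMul μ (nstep P 0) = μ := by
  funext y
  simp [_root_.tsumVecMul, nstep]

lemma eq_tsumVecMul_nstep {P : S → S → ℝ} (hP : IsStochastic P) {μ : ℕ → S → ℝ}
    (hμ : IsProbVec (μ 0)) (hstep : ∀ k, μ (k + 1) = tsumVecMul (μ k) P) (k : ℕ) :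
    μ k = tsumVecMul (μ 0) (nstep P k) := by
  induction k with
  | zero => exact (tsumVecMul_nstep_zero P _).symm
  | succ k ih =>
    rw [hstep, ih, tsumVecMul_tsumVecMul hμ (isStochastic_nstep hP k) hP]
    rfl

lemma tsum_abs_tsumVecMul_sub_le (hμ : IsProbVec μ) (hQ : IsStochastic Q) {π : S → ℝ}
    (hπ : Summable π) {c : ℝ} (hc : ∀ x, ∑' y, |Q x y - π y| ≤ c) :
    ∑' y, |tsumVecMul μ Q y - π y| ≤ c := by
  have hrow : ∀ x, ∑' y, |μ x * (Q x y - π y)| = μ x * ∑' y, |Q x y - π y| := fun x => by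
    simp only [abs_mul, abs_of_nonneg (hμ.nonneg x), tsum_mul_left]
  have hdiff : ∀ y, tsumVecMul μ Q y - π y = ∑' x, μ x * (Q x y - π y) := fun y => by
    have hcol : Summable fun x => μ x * Q x y := hμ.summable.of_nonneg_of_le
      (fun x => mul_nonneg (hμ.nonneg x) ((hQ x).nonneg y))
      fun x => mul_le_of_le_one_right (hμ.nonneg x) ((hQ x).le_one y)
    simp only [mul_sub, (hcol.tsum_sub (hμ.summable.mul_right (π y))), tsum_mul_right,
      hμ.tsum_eq_one, one_mul, _root_.tsumVecMul]
  have hbound : ∀ x, μ x * ∑' y, |Q x y - π y| ≤ μ x * c := fun x =>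
    mul_le_mul_of_nonneg_left (hc x) (hμ.nonneg x)
  have hrows : Summable fun x => μ x * ∑' y, |Q x y - π y| :=
    (hμ.summable.mul_right c).of_nonneg_of_le
      (fun x => mul_nonneg (hμ.nonneg x) (tsum_nonneg fun _ => abs_nonneg _)) hbound
  have hsum : Summable fun p : S × S => |μ p.1 * (Q p.1 p.2 - π p.2)| :=
    (summable_prod_of_nonneg fun p => abs_nonneg _).2
      ⟨fun x => (((hQ x).summable.sub hπ).mul_left (μ x)).abs, by simpa only [hrow] using hrows⟩
  calc ∑' y, |tsumVecMul μ Q y - π y| = ∑' y, |∑' x, μ x * (Q x y - π y)| := by simp only [hdiff]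
    _ ≤ ∑' x, ∑' y, |μ x * (Q x y - π y)| := tsum_abs_tsum_le hsum
    _ = ∑' x, μ x * ∑' y, |Q x y - π y| := by simp only [hrow]
    _ ≤ ∑' x, μ x * c := hrows.tsum_le_tsum hbound (hμ.summable.mul_right c)
    _ = c := by rw [tsum_mul_right, hμ.tsum_eq_one, one_mul]

lemma IsProbVec.norm_tsum_smul_le {E : Type*} [NormedAddCommGroup E] [NormedSpace ℝ E]
    (hμ : IsProbVec μ) {V : S → E} {M : ℝ} (hV : ∀ x, ‖V x‖ ≤ M) : ‖∑' x, μ x • V x‖ ≤ M := by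
  have hpoint : ∀ x, ‖μ x • V x‖ ≤ μ x * M := fun x => by
    rw [norm_smul, Real.norm_of_nonneg (hμ.nonneg x)]
    exact mul_le_mul_of_nonneg_left (hV x) (hμ.nonneg x)
  have hsum : Summable fun x => ‖μ x • V x‖ :=
    (hμ.summable.mul_right M).of_nonneg_of_le (fun _ => norm_nonneg _) hpoint
  calc ‖∑' x, μ x • V x‖ ≤ ∑' x, ‖μ x • V x‖ := norm_tsum_le_tsum_norm hsum
    _ ≤ ∑' x, μ x * M := hsum.tsum_le_tsum hpoint (hμ.summable.mul_right M)
    _ = M := by rw [tsum_mul_right, hμ.tsum_eq_one, one_mul]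

end Stochastic

section Law

variable {Ω S : Type} [MeasurableSpace S] [Countable S] [MeasurableSingletonClass S]

def probMass [MeasurableSpace Ω] (P : Measure Ω) (Y : Ω → S) (i : S) : ℝ :=
  (P {ω | Y ω = i}).toReal

lemma isProbVec_probMass [MeasurableSpace Ω] (P : Measure Ω) [IsProbabilityMeasure P]
    {Y : Ω → S} (hY : Measurable Y) : IsProbVec (probMass P Y) where
  nonneg _ := ENNReal.toReal_nonneg
  tsum_eq_one := by
    have h := (P.map Y).tsum_indicator_apply_singleton Set.univ MeasurableSet.univ
    simp only [Set.indicator_univ, Measure.map_apply hY (measurableSet_singleton _),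
      Measure.map_apply hY MeasurableSet.univ, Set.preimage_univ, measure_univ] at h
    simp only [probMass]
    rw [← ENNReal.tsum_toReal_eq fun _ => measure_ne_top _ _]
    simpa [Set.preimage] using congrArg ENNReal.toReal h

lemma probMass_eq_tsumVecMul_of_condExp {m mΩ : MeasurableSpace Ω} (hm : m ≤ mΩ)
    {P : Measure Ω} [IsProbabilityMeasure P] {Y Z : Ω → S} (hY : Measurable Y)
    (hZ : Measurable Z) {Q : S → S → ℝ} (hQ : IsStochastic Q)
    (hcond : ∀ j, P[fun ω => Set.indicator {ω' | Z ω' = j} (fun _ => (1:ℝ)) ω | m]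
      =ᵐ[P] fun ω => Q (Y ω) j) :
    probMass P Z = tsumVecMul (probMass P Y) Q := by
  funext j
  have hint : Integrable (fun i => Q i j) (P.map Y) :=
    (integrable_const (1 : ℝ)).mono' (measurable_of_countable _).aestronglyMeasurable
      (ae_of_all _ fun i => by
        rw [Real.norm_eq_abs, abs_of_nonneg ((hQ i).nonneg j)]; exact (hQ i).le_one j)
  calc probMass P Z j
      = ∫ ω, Set.indicator {ω' | Z ω' = j} (fun _ => (1:ℝ)) ω ∂P := by
        rw [integral_indicator_const (1 : ℝ) (s := {ω | Z ω = j}) (hZ (measurableSet_singleton j)),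
          smul_eq_mul, mul_one, measureReal_def, probMass]
    _ = ∫ ω, Q (Y ω) j ∂P := by rw [← integral_condExp hm, integral_congr_ae (hcond j)]
    _ = ∫ i, Q i j ∂(P.map Y) :=
        (integral_map hY.aemeasurable
          (measurable_of_countable fun i => Q i j).aestronglyMeasurable).symm
    _ = tsumVecMul (probMass P Y) Q j := by
        simp only [integral_countable hint, measureReal_def,
          Measure.map_apply hY (measurableSet_singleton _), smul_eq_mul, tsumVecMul, probMass]
        rfl

end Law

lemma Matrix.PosSemidef.sqrt_mul_sqrt {n : Type*} [Fintype n] [DecidableEq n]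
    {A : Matrix n n ℝ} (hA : A.PosSemidef) : hA.sqrt * hA.sqrt = A := by
  have hU : (star hA.1.eigenvectorUnitary : Matrix n n ℝ) * hA.1.eigenvectorUnitary.1 = 1 :=
    Unitary.coe_star_mul_self _
  conv_rhs => rw [hA.1.spectral_theorem, Unitary.conjStarAlgAut_apply]
  simp only [Matrix.PosSemidef.sqrt, mul_assoc]
  rw [← mul_assoc _ _ (Matrix.diagonal _ * _), hU, Matrix.one_mul, ← mul_assoc (Matrix.diagonal _),
    Matrix.diagonal_mul_diagonal]
  congr 3
  funext i
  simp [Real.mul_self_sqrt (hA.eigenvalues_nonneg i)]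

lemma Matrix.PosDef.inv_sqrt_mul_mul_inv_sqrt {n : Type*} [Fintype n] [DecidableEq n]
    {A : Matrix n n ℝ} (hA : A.PosDef) :
    (hA.posSemidef.sqrt)⁻¹ * A * (hA.posSemidef.sqrt)⁻¹ = 1 := by
  set s := hA.posSemidef.sqrt
  have hs : IsUnit s.det := by
    refine isUnit_iff_ne_zero.2 fun h => hA.det_pos.ne' ?_
    rw [← hA.posSemidef.sqrt_mul_sqrt, Matrix.det_mul, h, zero_mul]
  conv_lhs => rw [← hA.posSemidef.sqrt_mul_sqrt]
  rw [← mul_assoc, Matrix.nonsing_inv_mul _ hs, one_mul, Matrix.mul_nonsing_inv _ hs]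

section Frobenius

attribute [local instance] Matrix.frobeniusNormedAddCommGroup

lemma hsNorm_eq_norm {d : ℕ} (M : Matrix (Fin d) (Fin d) ℝ) : hsNorm M = ‖M‖ := by
  simp [hsNorm, Matrix.frobenius_norm_def, Real.sqrt_eq_rpow]

lemma hsNorm_nonneg {d : ℕ} (M : Matrix (Fin d) (Fin d) ℝ) : 0 ≤ hsNorm M :=
  Real.sqrt_nonneg _

lemma hsNorm_mul_le {d : ℕ} (A B : Matrix (Fin d) (Fin d) ℝ) :
    hsNorm (A * B) ≤ hsNorm A * hsNorm B := by
  simpa only [hsNorm_eq_norm] using Matrix.frobenius_norm_mul A B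

end Frobenius

lemma hsNorm_mul_mul_le {d : ℕ} (A M B : Matrix (Fin d) (Fin d) ℝ) :
    hsNorm (A * M * B) ≤ hsNorm A * hsNorm M * hsNorm B :=
  (hsNorm_mul_le _ _).trans (mul_le_mul_of_nonneg_right (hsNorm_mul_le _ _) (hsNorm_nonneg _))

lemma hsNorm_le_of_abs_le {d : ℕ} {M : Matrix (Fin d) (Fin d) ℝ} {t : ℝ} (ht : 0 ≤ t)
    (hM : ∀ a b, |M a b| ≤ t) : hsNorm M ≤ d * t := by
  have hsq : ∑ a : Fin d, ∑ b : Fin d, M a b ^ 2 ≤ (d * t) ^ 2 := by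
    calc ∑ a : Fin d, ∑ b : Fin d, M a b ^ 2 ≤ ∑ _a : Fin d, ∑ _b : Fin d, t ^ 2 := by
          refine Finset.sum_le_sum fun a _ => Finset.sum_le_sum fun b _ => ?_
          exact sq_le_sq' (abs_le.1 (hM a b)).1 (abs_le.1 (hM a b)).2
      _ = (d * t) ^ 2 := by
          simp only [Finset.sum_const, Finset.card_univ, Fintype.card_fin, nsmul_eq_mul]; ring
  exact (Real.sqrt_le_sqrt hsq).trans_eq (Real.sqrt_sq (by positivity))

lemma abs_mul_apply_le_of_norm_le {ι : Type*} [Fintype ι] {v : EuclideanSpace ℝ ι} {R : ℝ}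
    (hv : ‖v‖ ≤ R) (a b : ι) : |v a * v b| ≤ R ^ 2 := by
  have h : ∀ a, |v a| ≤ R := fun a => (PiLp.norm_apply_le v a).trans hv
  rw [abs_mul, sq]
  exact mul_le_mul (h a) (h b) (abs_nonneg _) ((abs_nonneg _).trans (h a))

lemma IsProbVec.abs_centered_mul_le {S : Type} {μ : S → ℝ} (hμ : IsProbVec μ) {ι : Type*}
    [Fintype ι] {V : S → EuclideanSpace ℝ ι} {M : ℝ} (hV : ∀ x, ‖V x‖ ≤ M) (j : S) (a b : ι) :
    |(V j - ∑' y, μ y • V y) a * (V j - ∑' y, μ y • V y) b| ≤ (2 * M) ^ 2 :=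
  abs_mul_apply_le_of_norm_le (two_mul M ▸ norm_sub_le_of_le (hV j) (hμ.norm_tsum_smul_le hV)) a b

theorem expected_covariance_geometric_general
    (d : ℕ)
    (S : Type) [Countable S] [MeasurableSpace S] [MeasurableSingletonClass S]
    (Ω : Type) (mΩ : MeasurableSpace Ω) (P : Measure Ω) [IsProbabilityMeasure P]
    (F : MeasureTheory.Filtration ℕ mΩ) (X : ℕ → Ω → S)
    (hXmeas : ∀ k, Measurable[F k] (X k))
    (Ptr : S → S → ℝ) (hPnn : ∀ x y, 0 ≤ Ptr x y) (hPsum : ∀ x, ∑' y, Ptr x y = 1)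
    (hMarkov : ∀ (k : ℕ) (j : S),
      P[fun ω => Set.indicator {ω' | X (k + 1) ω' = j} (fun _ => (1:ℝ)) ω | F k]
        =ᵐ[P] fun ω => Ptr (X k ω) j)
    (pr : S → ℝ) (hprsum : ∑' x, pr x = 1)
    (K₁ ρ : ℝ)
    (hergo : ∀ (x : S) (n : ℕ), ∑' y, |nstep Ptr n x y - pr y| ≤ K₁ * ρ ^ n)
    (V : S → EuclideanSpace ℝ (Fin d)) (M_V : ℝ)
    (hVbdd : ∀ x : S, ‖V x‖ ≤ M_V)
    (Sinf : Matrix (Fin d) (Fin d) ℝ)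
    (hSinf : Sinf = Matrix.of fun a b => ∑' p : S × S,
      pr p.1 * Ptr p.1 p.2 *
        ((V p.2 - ∑' y, Ptr p.1 y • V y) a * (V p.2 - ∑' y, Ptr p.1 y • V y) b))
    (hpos : Sinf.PosDef)
    -- the expected conditional covariance E(Σ_k), written via p_i(k) = Prob(X_k = i)
    (ESk : ℕ → Matrix (Fin d) (Fin d) ℝ)
    (hESk : ∀ k, ESk k = Matrix.of fun a b => ∑' p : S × S,
      (P {ω | X k ω = p.1}).toReal * Ptr p.1 p.2 *
        ((V p.2 - ∑' y, Ptr p.1 y • V y) a * (V p.2 - ∑' y, Ptr p.1 y • V y) b)) :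
    ∃ K : ℝ, ∀ k : ℕ, 1 ≤ k →
      hsNorm ((hpos.posSemidef.sqrt)⁻¹ * ESk k * (hpos.posSemidef.sqrt)⁻¹ - 1) ≤ K * ρ ^ k := by
  have hP : IsStochastic Ptr := fun x => ⟨hPnn x, hPsum x⟩
  have hπ : Summable pr := summable_of_tsum_ne_zero (by simp [hprsum])
  have hX : ∀ k, Measurable (X k) := fun k => (hXmeas k).mono (F.le k) le_rfl
  have hlaw : ∀ k, probMass P (X k) = tsumVecMul (probMass P (X 0)) (nstep Ptr k) :=
    eq_tsumVecMul_nstep hP (isProbVec_probMass P (hX 0)) fun k =>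
      probMass_eq_tsumVecMul_of_condExp (F.le k) (hX k) (hX (k + 1)) hP (hMarkov k)
  have hTV : ∀ k, ∑' i, |probMass P (X k) i - pr i| ≤ K₁ * ρ ^ k := fun k => by
    rw [hlaw k]
    exact tsum_abs_tsumVecMul_sub_le (isProbVec_probMass P (hX 0)) (isStochastic_nstep hP k) hπ
      fun x => hergo x k
  have hdiff : ∀ k, hsNorm (ESk k - Sinf) ≤ d * (K₁ * ρ ^ k * (2 * M_V) ^ 2) := fun k => by
    refine (hsNorm_le_of_abs_le (t := (∑' i, |probMass P (X k) i - pr i|) * (2 * M_V) ^ 2)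
      (by positivity) fun a b => ?_).trans (by gcongr; exact hTV k)
    rw [hESk, hSinf]
    exact hP.abs_tsum_mul_mul_sub_le (isProbVec_probMass P (hX k)).summable hπ fun p =>
      (hP p.1).abs_centered_mul_le hVbdd p.2 a b
  set B := (hpos.posSemidef.sqrt)⁻¹
  refine ⟨hsNorm B * (d * (K₁ * (2 * M_V) ^ 2)) * hsNorm B, fun k _ => ?_⟩
  calc hsNorm (B * ESk k * B - 1) = hsNorm (B * (ESk k - Sinf) * B) := by
        rw [mul_sub, sub_mul, hpos.inv_sqrt_mul_mul_inv_sqrt]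
    _ ≤ hsNorm B * hsNorm (ESk k - Sinf) * hsNorm B := hsNorm_mul_mul_le _ _ _
    _ ≤ hsNorm B * (d * (K₁ * ρ ^ k * (2 * M_V) ^ 2)) * hsNorm B :=
        mul_le_mul_of_nonneg_right (mul_le_mul_of_nonneg_left (hdiff k) (hsNorm_nonneg B))
          (hsNorm_nonneg B)
    _ = hsNorm B * (d * (K₁ * (2 * M_V) ^ 2)) * hsNorm B * ρ ^ k := by ring

/-- Geometric convergence of the expected conditional covariances (the estimate used in the
proof of Theorem 3.2): under Assumption 3.1,
`‖Σ∞^{−1/2} E(Σ_k) Σ∞^{−1/2} − I‖_HS ≤ K ρ^k` for all `k ≥ 1`, where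
`E(Σ_k) = Σ_{i,j} p_i(k) P_{ij} (V(j) − E(V(X₁)|X₀=i))(V(j) − E(V(X₁)|X₀=i))ᵀ` and
`p_i(k) = Prob(X_k = i)`. -/
theorem expected_covariance_geometric
    (d : ℕ)
    (S : Type) [Countable S] [MeasurableSpace S] [MeasurableSingletonClass S]
    (Ω : Type) (mΩ : MeasurableSpace Ω) (P : Measure Ω) [IsProbabilityMeasure P]
    (F : MeasureTheory.Filtration ℕ mΩ) (X : ℕ → Ω → S)
    (hXmeas : ∀ k, Measurable[F k] (X k))
    (Ptr : S → S → ℝ) (hPnn : ∀ x y, 0 ≤ Ptr x y) (hPsum : ∀ x, ∑' y, Ptr x y = 1)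
    (hMarkov : ∀ (k : ℕ) (j : S),
      P[fun ω => Set.indicator {ω' | X (k + 1) ω' = j} (fun _ => (1:ℝ)) ω | F k]
        =ᵐ[P] fun ω => Ptr (X k ω) j)
    (pr : S → ℝ) (hprnn : ∀ x, 0 ≤ pr x) (hprsum : ∑' x, pr x = 1)
    (hstat : ∀ y, ∑' x, pr x * Ptr x y = pr y)
    (huniq : ∀ pr' : S → ℝ, (∀ x, 0 ≤ pr' x) → (∑' x, pr' x = 1) →
      (∀ y, ∑' x, pr' x * Ptr x y = pr' y) → pr' = pr)
    (K₁ ρ : ℝ) (hK₁ : 0 < K₁) (hρ : ρ ∈ Set.Ico (0:ℝ) 1)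
    (hergo : ∀ (x : S) (n : ℕ), ∑' y, |nstep Ptr n x y - pr y| ≤ K₁ * ρ ^ n)
    (r V : S → EuclideanSpace ℝ (Fin d)) (M_V : ℝ)
    (hPoisson : ∀ x : S, (∑' y, pr y • r y) = r x + (∑' y, Ptr x y • V y) - V x)
    (hVbdd : ∀ x : S, ‖V x‖ ≤ M_V)
    (Sinf : Matrix (Fin d) (Fin d) ℝ)
    (hSinf : Sinf = Matrix.of fun a b => ∑' p : S × S,
      pr p.1 * Ptr p.1 p.2 *
        ((V p.2 - ∑' y, Ptr p.1 y • V y) a * (V p.2 - ∑' y, Ptr p.1 y • V y) b))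
    (hpos : Sinf.PosDef)
    -- the expected conditional covariance E(Σ_k), written via p_i(k) = Prob(X_k = i)
    (ESk : ℕ → Matrix (Fin d) (Fin d) ℝ)
    (hESk : ∀ k, ESk k = Matrix.of fun a b => ∑' p : S × S,
      (P {ω | X k ω = p.1}).toReal * Ptr p.1 p.2 *
        ((V p.2 - ∑' y, Ptr p.1 y • V y) a * (V p.2 - ∑' y, Ptr p.1 y • V y) b)) :
    ∃ K : ℝ, ∀ k : ℕ, 1 ≤ k →
      hsNorm ((hpos.posSemidef.sqrt)⁻¹ * ESk k * (hpos.posSemidef.sqrt)⁻¹ - 1) ≤ K * ρ ^ k :=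
  expected_covariance_geometric_general d S Ω mΩ P F X hXmeas Ptr hPnn hPsum hMarkov pr hprsum K₁ ρ
    hergo V M_V hVbdd Sinf hSinf hpos ESk hESk
end
end

section
/- Let Ā be an invertible real d×d matrix and let (ε_l)_{l≥0} be positive real numbers. For integers j ≥ 0 and n ≥ j+1 define Υ_j^n = ε_j Σ_{k=j+1}^{n} ∏_{l=j+1}^{k−1}(I − ε_l Ā) − Ā^{−1}, with the convention that a product whose lower index exceeds its upper index equals the identity matrix. Then for all integers j ≥ 0 and n ≥ j+2: Υ_{j+1}^n − Υ_j^n = ε_{j+1}(Υ_{j+1}^n + Ā^{−1})Ā − ε_{j+1} I + ((ε_{j+1} − ε_j)/ε_j)(Υ_j^n + Ā^{−1}). -/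
/-! Writing `S_j = Σ_{k=j+1}^n ∏_{l=j+1}^{k−1}(I − ε_l Ā)`, so that `Υ_j^n + Ā⁻¹ = ε_j S_j`,
peeling off the term `k = j + 1` and the first factor of every other product gives
`S_j = I + (I − ε_{j+1} Ā) S_{j+1}`. Since `S_{j+1}` commutes with `Ā`, the identity is then a
polynomial identity in `Ā` and `S_{j+1}`, and `Ā⁻¹` cancels from both sides. -/

open scoped BigOperators Matrix

noncomputable section

/-- The ordered matrix product `∏_{l=a}^{b} (I − ε_l Ā)`, with the convention that a product
whose lower index exceeds its upper index equals the identity matrix. -/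
def iccMatProd {d : ℕ} (ε : ℕ → ℝ) (A : Matrix (Fin d) (Fin d) ℝ) (a b : ℕ) :
    Matrix (Fin d) (Fin d) ℝ :=
  (((List.range' a (b + 1 - a)).map fun l => (1 : Matrix (Fin d) (Fin d) ℝ) - ε l • A)).prod

/-- `Υ_j^n = ε_j Σ_{k=j+1}^n ∏_{l=j+1}^{k−1}(I − ε_l Ā) − Ā⁻¹`. -/
def Upsilon {d : ℕ} (ε : ℕ → ℝ) (A : Matrix (Fin d) (Fin d) ℝ) (j n : ℕ) :
    Matrix (Fin d) (Fin d) ℝ :=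
  ε j • (∑ k ∈ Finset.Icc (j + 1) n, iccMatProd ε A (j + 1) (k - 1)) - A⁻¹

section

variable {d : ℕ} (ε : ℕ → ℝ) (A : Matrix (Fin d) (Fin d) ℝ)

lemma iccMatProd_of_lt {a b : ℕ} (h : b < a) : iccMatProd ε A a b = 1 := by
  simp [iccMatProd, Nat.sub_eq_zero_of_le h]

lemma iccMatProd_eq_mul {a b : ℕ} (h : a ≤ b) :
    iccMatProd ε A a b = (1 - ε a • A) * iccMatProd ε A (a + 1) b := by
  rw [iccMatProd, iccMatProd, show b + 1 - a = (b - a) + 1 by omega,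
    show b + 1 - (a + 1) = b - a by omega]
  rfl

lemma commute_iccMatProd (a b : ℕ) : Commute (iccMatProd ε A a b) A :=
  Commute.list_prod_left _ _ fun _ hx => by
    obtain ⟨l, -, rfl⟩ := List.mem_map.mp hx
    exact (Commute.one_left A).sub_left ((Commute.refl A).smul_left _)

lemma sum_iccMatProd_eq_one_add {j n : ℕ} (h : j + 1 ≤ n) :
    ∑ k ∈ Finset.Icc (j + 1) n, iccMatProd ε A (j + 1) (k - 1) =
      1 + (1 - ε (j + 1) • A) * ∑ k ∈ Finset.Icc (j + 2) n, iccMatProd ε A (j + 2) (k - 1) := by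
  rw [← Finset.add_sum_Ioc_eq_sum_Icc h, ← Finset.Icc_add_one_left_eq_Ioc,
    iccMatProd_of_lt ε A (by omega), Finset.mul_sum]
  refine congrArg _ (Finset.sum_congr rfl fun k hk => ?_)
  exact iccMatProd_eq_mul ε A (by simp only [Finset.mem_Icc] at hk; omega)

end

theorem Upsilon_increment_identity_general {d : ℕ} (A : Matrix (Fin d) (Fin d) ℝ)
    (ε : ℕ → ℝ) (hε : ∀ l, 0 < ε l) (j n : ℕ) (hn : j + 2 ≤ n) :
    Upsilon ε A (j + 1) n - Upsilon ε A j n =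
      ε (j + 1) • ((Upsilon ε A (j + 1) n + A⁻¹) * A) -
        ε (j + 1) • (1 : Matrix (Fin d) (Fin d) ℝ) +
        ((ε (j + 1) - ε j) / ε j) • (Upsilon ε A j n + A⁻¹) := by
  set S := ∑ k ∈ Finset.Icc (j + 2) n, iccMatProd ε A (j + 2) (k - 1)
  have hS : Commute S A := Commute.sum_left _ _ _ fun k _ => commute_iccMatProd ε A _ _
  have hrec := sum_iccMatProd_eq_one_add ε A (j := j) (n := n) (by omega)
  simp only [Upsilon, sub_add_cancel, hrec]
  rw [smul_smul, div_mul_cancel₀ _ (hε j).ne', smul_mul_assoc, hS.eq, sub_mul, one_mul,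
    Matrix.smul_mul]
  module

/-- The key algebraic identity for the increments `Υ_{j+1}^n − Υ_j^n` used in the analysis of
averaged TD learning. -/
theorem Upsilon_increment_identity {d : ℕ} (A : Matrix (Fin d) (Fin d) ℝ)
    (hA : IsUnit A.det) (ε : ℕ → ℝ) (hε : ∀ l, 0 < ε l) (j n : ℕ) (hn : j + 2 ≤ n) :
    Upsilon ε A (j + 1) n - Upsilon ε A j n =
      ε (j + 1) • ((Upsilon ε A (j + 1) n + A⁻¹) * A) -
        ε (j + 1) • (1 : Matrix (Fin d) (Fin d) ℝ) +
        ((ε (j + 1) - ε j) / ε j) • (Upsilon ε A j n + A⁻¹) :=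
  Upsilon_increment_identity_general A ε hε j n hn
end
end

section
/- Let δ ∈ (1/2, 1), let ε_j = 1/(j+1)^δ, let κ₁, κ₂, κ₃, κ₄ > 0, and let k̂ ≥ 0 be an integer with κ₃ ε_{k̂} < 1. Then there exists a constant K such that for all integers k ≥ max(k̂+1, 2): κ₁ ∏_{j=k̂}^{k−1} (1 − κ₃ ε_j) + κ₂ Σ_{j=k̂}^{k−1} κ₄ ε_j² log(1/ε_j) ∏_{l=j+1}^{k−1} (1 − κ₃ ε_l) ≤ K (log k)/k^{2δ−1}. -/
/-!
Write `u_k` for the left-hand side and `g_k = log k / k^(2δ-1)`. The left-hand side solves the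
affine recursion `u_{k+1} = (1 - κ₃ ε_k) u_k + κ₂ κ₄ ε_k² log (1/ε_k)`, so it suffices to show that
`K g_k` is a supersolution for large `k`. Since `x ↦ log x · x^(2-2δ)` increases,
`g_{k+1} ≥ (1 - 1/(k+1)) g_k`, and `1/(k+1) ≤ κ₃ ε_k / 2` eventually because `(k+1) ε_k → ∞`.
The forcing term satisfies `ε_k² log(1/ε_k) ≤ 2δ ε_k g_k`, which is absorbed by the remaining
`κ₃ ε_k K g_k / 2` once `K ≥ 4 κ₂ κ₄ δ / κ₃`. Finitely many initial indices only enlarge `K`.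
-/

open scoped BigOperators

/-- The stepsizes ε_j = 1/(j+1)^δ. -/
noncomputable def eps (δ : ℝ) (j : ℕ) : ℝ := 1 / ((j : ℝ) + 1) ^ δ

open Finset Filter Topology

section AffineRecursion

variable (a b : ℕ → ℝ) (c : ℝ) (m : ℕ)

/-- The solution of `u n = a n * u (n - 1) + b n` started from `u (m - 1) = c`. -/
noncomputable def affineRecSol (n : ℕ) : ℝ :=
  c * ∏ j ∈ Icc m n, a j + ∑ j ∈ Icc m n, b j * ∏ l ∈ Icc (j + 1) n, a l

theorem affineRecSol_succ {n : ℕ} (h : m ≤ n + 1) :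
    affineRecSol a b c m (n + 1) = a (n + 1) * affineRecSol a b c m n + b (n + 1) := by
  have hprod : ∀ j ∈ Icc m n,
      b j * ∏ l ∈ Icc (j + 1) (n + 1), a l = b j * (∏ l ∈ Icc (j + 1) n, a l) * a (n + 1) := by
    intro j hj
    rw [prod_Icc_succ_top (by grind), mul_assoc]
  simp only [affineRecSol]
  rw [prod_Icc_succ_top h, sum_Icc_succ_top h, sum_congr rfl hprod, ← sum_mul,
    Icc_eq_empty (a := n + 1 + 1) (b := n + 1) (by omega), prod_empty]
  ring

end AffineRecursion

theorem le_of_affine_step {u v a b : ℕ → ℝ} {N : ℕ}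
    (hu : ∀ n ≥ N, u (n + 1) ≤ a n * u n + b n) (ha : ∀ n ≥ N, 0 ≤ a n)
    (hv : ∀ n ≥ N, a n * v n + b n ≤ v (n + 1)) (hN : u N ≤ v N) :
    ∀ n ≥ N, u n ≤ v n := by
  intro n hn
  induction n, hn using Nat.le_induction with
  | base => exact hN
  | succ n hn ih =>
    calc u (n + 1) ≤ a n * u n + b n := hu n hn
      _ ≤ a n * v n + b n := by gcongr; exact ha n hn
      _ ≤ v (n + 1) := hv n hn

theorem exists_forall_ge_le_mul_of_forall_ge {u g : ℕ → ℝ} {n₀ N : ℕ} {K : ℝ}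
    (hg : ∀ n ≥ n₀, 0 < g n) (hK : ∀ n ≥ N, u n ≤ K * g n) :
    ∃ K', ∀ n ≥ n₀, u n ≤ K' * g n := by
  refine ⟨max K (∑ n ∈ range N, |u n / g n|), fun n hn => ?_⟩
  rcases le_or_gt N n with hNn | hnN
  · exact (hK n hNn).trans (by gcongr; exacts [(hg n hn).le, le_max_left _ _])
  · have hquot : u n / g n ≤ ∑ n ∈ range N, |u n / g n| :=
      (le_abs_self _).trans
        (single_le_sum (f := fun n => |u n / g n|) (fun _ _ => abs_nonneg _) (mem_range.2 hnN))
    rw [← div_le_iff₀ (hg n hn)]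
    exact hquot.trans (le_max_right _ _)

theorem exists_forall_ge_le_mul_of_affine_supersolution {u a b g : ℕ → ℝ} {n₀ : ℕ} {K₀ : ℝ}
    (hg : ∀ n ≥ n₀, 0 < g n)
    (h : ∀ᶠ n in atTop, u (n + 1) ≤ a n * u n + b n ∧ 0 ≤ a n ∧
      ∀ K ≥ K₀, a n * (K * g n) + b n ≤ K * g (n + 1)) :
    ∃ K, ∀ n ≥ n₀, u n ≤ K * g n := by
  obtain ⟨N, hN⟩ := eventually_atTop.1 (h.and (eventually_ge_atTop n₀))
  have hK : K₀ ≤ max K₀ (u N / g N) := le_max_left _ _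
  have hbase : u N ≤ max K₀ (u N / g N) * g N :=
    (div_le_iff₀ (hg N (hN N le_rfl).2)).1 (le_max_right _ _)
  exact exists_forall_ge_le_mul_of_forall_ge hg <| le_of_affine_step
    (fun n hn => (hN n hn).1.1) (fun n hn => (hN n hn).1.2.1)
    (fun n hn => (hN n hn).1.2.2 _ hK) hbase

theorem log_div_rpow_mul_self_le {x y a : ℝ} (hx : 1 ≤ x) (hxy : x ≤ y) (ha : a ≤ 1) :
    Real.log x / x ^ a * x ≤ Real.log y / y ^ a * y := by
  have hrw : ∀ z : ℝ, 0 < z → Real.log z / z ^ a * z = Real.log z * z ^ (1 - a) := fun z hz => by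
    rw [Real.rpow_sub hz, Real.rpow_one]; ring
  rw [hrw x (by linarith), hrw y (by linarith)]
  gcongr
  exact Real.log_nonneg (hx.trans hxy)

theorem log_add_one_le_two_mul_log {x : ℝ} (hx : 2 ≤ x) : Real.log (x + 1) ≤ 2 * Real.log x := by
  calc Real.log (x + 1) ≤ Real.log (x ^ 2) := Real.log_le_log (by linarith) (by nlinarith)
    _ = 2 * Real.log x := by rw [Real.log_pow]; norm_num

theorem log_one_div_eps (δ : ℝ) (k : ℕ) : Real.log (1 / eps δ k) = δ * Real.log (k + 1) := by
  rw [eps, one_div_one_div, Real.log_rpow (by positivity)]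

theorem eps_mul_log_le {δ : ℝ} (hδ₀ : 0 ≤ δ) (hδ₁ : δ ≤ 1) {k : ℕ} (hk : 2 ≤ k) :
    eps δ k * Real.log (k + 1) ≤ 2 * (Real.log k / (k : ℝ) ^ (2 * δ - 1)) := by
  have hk' : (2 : ℝ) ≤ k := by exact_mod_cast hk
  have hpow : (k : ℝ) ^ (2 * δ - 1) ≤ ((k : ℝ) + 1) ^ δ :=
    calc (k : ℝ) ^ (2 * δ - 1) ≤ (k : ℝ) ^ δ :=
          Real.rpow_le_rpow_of_exponent_le (by linarith) (by linarith)
      _ ≤ ((k : ℝ) + 1) ^ δ := by gcongr; linarith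
  have hlog : 0 ≤ Real.log (k + 1) := Real.log_nonneg (by linarith)
  calc eps δ k * Real.log (k + 1) ≤ Real.log (k + 1) / (k : ℝ) ^ (2 * δ - 1) := by
        rw [eps, one_div_mul_eq_div]
        gcongr
      _ ≤ 2 * Real.log k / (k : ℝ) ^ (2 * δ - 1) := by
        gcongr
        exact log_add_one_le_two_mul_log hk'
      _ = 2 * (Real.log k / (k : ℝ) ^ (2 * δ - 1)) := mul_div_assoc _ _ _

theorem tendsto_eps_atTop {δ : ℝ} (hδ : 0 < δ) : Tendsto (eps δ) atTop (𝓝 0) := by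
  have h := tendsto_inv_atTop_zero.comp ((tendsto_rpow_atTop hδ).comp
    (tendsto_atTop_add_const_right _ 1 tendsto_natCast_atTop_atTop))
  refine h.congr fun k => ?_
  simp [eps]

theorem tendsto_add_one_mul_eps_atTop {δ : ℝ} (hδ : δ < 1) :
    Tendsto (fun k : ℕ => ((k : ℝ) + 1) * eps δ k) atTop atTop := by
  have h := (tendsto_rpow_atTop (sub_pos.2 hδ)).comp
    (tendsto_atTop_add_const_right _ 1 tendsto_natCast_atTop_atTop)
  refine h.congr fun k => ?_
  simp only [Function.comp, eps, Real.rpow_sub (by positivity : (0 : ℝ) < k + 1), Real.rpow_one]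
  ring

theorem affine_step_log_div_rpow_le {δ c κ K : ℝ} (hδ₀ : 0 ≤ δ) (hδ₁ : δ ≤ 1) (hc : 0 ≤ c)
    (hκ : 0 < κ) (hK : 4 * c * δ / κ ≤ K) {k : ℕ} (hk : 2 ≤ k)
    (hlarge : 2 / κ ≤ ((k : ℝ) + 1) * eps δ k) :
    (1 - κ * eps δ k) * (K * (Real.log k / (k : ℝ) ^ (2 * δ - 1))) +
        c * (eps δ k ^ 2 * Real.log (1 / eps δ k)) ≤
      K * (Real.log (k + 1 : ℕ) / ((k + 1 : ℕ) : ℝ) ^ (2 * δ - 1)) := by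
  set g := Real.log k / (k : ℝ) ^ (2 * δ - 1)
  set ε := eps δ k
  have hk' : (2 : ℝ) ≤ k := by exact_mod_cast hk
  have hg : 0 ≤ g := div_nonneg (Real.log_nonneg (by linarith)) (by positivity)
  have hε : 0 ≤ ε := by simp only [ε, eps]; positivity
  have hK₀ : 0 ≤ K := le_trans (by positivity) hK
  have hcδ : 4 * c * δ ≤ K * κ := (div_le_iff₀ hκ).1 hK
  -- `g` loses at most the fraction `1/(k+1) ≤ κ ε / 2` from `k` to `k+1`.
  have hdecay : g - κ * ε / 2 * g ≤ Real.log (k + 1 : ℕ) / ((k + 1 : ℕ) : ℝ) ^ (2 * δ - 1) := by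
    have hmono := log_div_rpow_mul_self_le (a := 2 * δ - 1) (by linarith)
      (by push_cast; linarith : (k : ℝ) ≤ (k + 1 : ℕ)) (by linarith)
    have hfrac : 1 / ((k : ℝ) + 1) ≤ κ * ε / 2 := by
      rw [div_le_iff₀ (by positivity)]
      rw [div_le_iff₀ hκ] at hlarge
      linarith
    calc g - κ * ε / 2 * g ≤ g - 1 / ((k : ℝ) + 1) * g := by gcongr
      _ = g * k / (k + 1 : ℕ) := by push_cast; field_simp; ring
      _ ≤ _ := (div_le_iff₀ (by positivity)).2 hmono
  have hforce : c * (ε ^ 2 * Real.log (1 / ε)) ≤ K * (κ * ε / 2 * g) :=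
    calc c * (ε ^ 2 * Real.log (1 / ε)) = c * δ * ε * (ε * Real.log (k + 1)) := by
          rw [log_one_div_eps]; ring
      _ ≤ c * δ * ε * (2 * g) :=
          mul_le_mul_of_nonneg_left (eps_mul_log_le hδ₀ hδ₁ hk) (mul_nonneg (mul_nonneg hc hδ₀) hε)
      _ ≤ K * κ / 4 * ε * (2 * g) := by gcongr; linarith
      _ = K * (κ * ε / 2 * g) := by ring
  calc (1 - κ * ε) * (K * g) + c * (ε ^ 2 * Real.log (1 / ε))
      ≤ K * g - K * (κ * ε * g) + K * (κ * ε / 2 * g) := by linarith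
    _ = K * (g - κ * ε / 2 * g) := by ring
    _ ≤ _ := by gcongr

theorem appendixA_bound_general (δ : ℝ) (hδ : δ ∈ Set.Ioo (1/2 : ℝ) 1)
    (κ₁ κ₂ κ₃ κ₄ : ℝ) (hκ₂ : 0 < κ₂) (hκ₃ : 0 < κ₃) (hκ₄ : 0 < κ₄)
    (khat : ℕ) :
    ∃ K : ℝ, ∀ k : ℕ, max (khat + 1) 2 ≤ k →
      κ₁ * ∏ j ∈ Finset.Icc khat (k - 1), (1 - κ₃ * eps δ j) +
        κ₂ * ∑ j ∈ Finset.Icc khat (k - 1), κ₄ * (eps δ j) ^ 2 * Real.log (1 / eps δ j) *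
          ∏ l ∈ Finset.Icc (j + 1) (k - 1), (1 - κ₃ * eps δ l) ≤
      K * Real.log k / (k : ℝ) ^ (2 * δ - 1) := by
  obtain ⟨hδ₁, hδ₂⟩ := hδ
  set a : ℕ → ℝ := fun j => 1 - κ₃ * eps δ j
  set b : ℕ → ℝ := fun j => κ₂ * κ₄ * (eps δ j ^ 2 * Real.log (1 / eps δ j))
  have hlhs : ∀ k, affineRecSol a b κ₁ khat (k - 1) =
      κ₁ * ∏ j ∈ Finset.Icc khat (k - 1), (1 - κ₃ * eps δ j) +
        κ₂ * ∑ j ∈ Finset.Icc khat (k - 1), κ₄ * (eps δ j) ^ 2 * Real.log (1 / eps δ j) *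
          ∏ l ∈ Finset.Icc (j + 1) (k - 1), (1 - κ₃ * eps δ l) := fun k => by
    simp only [affineRecSol, a, b, mul_sum]
    exact congrArg _ (sum_congr rfl fun _ _ => by ring)
  have hrate : ∀ k ≥ max (khat + 1) 2, 0 < Real.log k / (k : ℝ) ^ (2 * δ - 1) := fun k hk => by
    have hk : (1 : ℝ) < k := by exact_mod_cast le_of_max_le_right hk
    exact div_pos (Real.log_pos hk) (Real.rpow_pos_of_pos (by linarith) _)
  obtain ⟨K, hK⟩ := exists_forall_ge_le_mul_of_affine_supersolution
    (u := fun k => affineRecSol a b κ₁ khat (k - 1)) (K₀ := 4 * (κ₂ * κ₄) * δ / κ₃) hrate <| by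
    filter_upwards [(tendsto_add_one_mul_eps_atTop hδ₂).eventually_ge_atTop (2 / κ₃),
      (tendsto_eps_atTop (by linarith)).eventually (ge_mem_nhds (one_div_pos.2 hκ₃)),
      eventually_ge_atTop (khat + 2)] with n hlarge hsmall hn
    refine ⟨?_, ?_, fun K hK => affine_step_log_div_rpow_le (by linarith) hδ₂.le
      (mul_pos hκ₂ hκ₄).le hκ₃ hK (by omega) hlarge⟩
    · rw [show n + 1 - 1 = n - 1 + 1 by omega, affineRecSol_succ a b κ₁ khat (by omega),
        Nat.sub_add_cancel (by omega)]
    · rw [le_div_iff₀ hκ₃] at hsmall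
      show 0 ≤ 1 - κ₃ * eps δ n
      linarith
  refine ⟨K, fun k hk => ?_⟩
  rw [← hlhs, mul_div_assoc]
  exact hK k hk

/-- The analytic sequence estimate of Appendix A: for δ ∈ (1/2,1), ε_j = 1/(j+1)^δ,
positive constants κ₁,…,κ₄ and k̂ with κ₃ ε_{k̂} < 1, the recursive mean-square bound
κ₁ ∏_{j=k̂}^{k−1}(1−κ₃ε_j) + κ₂ Σ_{j=k̂}^{k−1} κ₄ ε_j² log(1/ε_j) ∏_{l=j+1}^{k−1}(1−κ₃ε_l)
is O((log k)/k^{2δ−1}). -/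
theorem appendixA_bound (δ : ℝ) (hδ : δ ∈ Set.Ioo (1/2 : ℝ) 1)
    (κ₁ κ₂ κ₃ κ₄ : ℝ) (hκ₁ : 0 < κ₁) (hκ₂ : 0 < κ₂) (hκ₃ : 0 < κ₃) (hκ₄ : 0 < κ₄)
    (khat : ℕ) (hkhat : κ₃ * eps δ khat < 1) :
    ∃ K : ℝ, ∀ k : ℕ, max (khat + 1) 2 ≤ k →
      κ₁ * ∏ j ∈ Finset.Icc khat (k - 1), (1 - κ₃ * eps δ j) +
        κ₂ * ∑ j ∈ Finset.Icc khat (k - 1), κ₄ * (eps δ j) ^ 2 * Real.log (1 / eps δ j) *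
          ∏ l ∈ Finset.Icc (j + 1) (k - 1), (1 - κ₃ * eps δ l) ≤
      K * Real.log k / (k : ℝ) ^ (2 * δ - 1) :=
  appendixA_bound_general δ hδ κ₁ κ₂ κ₃ κ₄ hκ₂ hκ₃ hκ₄ khat
end
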